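/- The kernel of the persistent Laplacian Δ^{L,K} on K₁ has dimension equal to dim(ker ∂^K) − dim(range ∂₂ ∩ K₁); that is, the multiplicity of the zero eigenvalue of Δ^{L,K} equals the persistent Betti number, the dimension of the image of the induced map on homology H(K) → H(L) in the middle degree. -/

import Mathlib

open Module
open scoped RealInnerProductSpace

/-- The multiplicity of the zero eigenvalue of the persistent Laplacian
`Δ^{L,K} = ∂^{L,K} ∘ (∂^{L,K})* + (∂^K)* ∘ ∂^K` on `K₁` equals the persistent Betti
number `dim(ker ∂^K) − dim(range ∂₂ ∩ K₁)`. Here `d₂, d₁` play the roles of the boundary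
maps `∂₂ : C₂ → C₁`, `∂₁ : C₁ → C₀` of `L`, the map `∂^{L,K} : C^{L,K} = ∂₂⁻¹(K₁) → K₁`
is induced by `∂₂`, and `∂^K : K₁ → K₀` is the restriction of `∂₁`. -/
theorem persistentLaplacian_ker_dim_eq_persistent_betti
    {C₂ C₁ C₀ : Type*}
    [NormedAddCommGroup C₂] [InnerProductSpace ℝ C₂] [FiniteDimensional ℝ C₂]
    [NormedAddCommGroup C₁] [InnerProductSpace ℝ C₁] [FiniteDimensional ℝ C₁]
    [NormedAddCommGroup C₀] [InnerProductSpace ℝ C₀] [FiniteDimensional ℝ C₀]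
    (d₂ : C₂ →ₗ[ℝ] C₁) (d₁ : C₁ →ₗ[ℝ] C₀) (hcomp : d₁ ∘ₗ d₂ = 0)
    (K₁ : Submodule ℝ C₁) (K₀ : Submodule ℝ C₀)
    (hK : ∀ x ∈ K₁, d₁ x ∈ K₀) :
    Module.finrank ℝ
        (LinearMap.ker
          ((d₂.restrict (p := Submodule.comap d₂ K₁) (q := K₁) (fun _ hx => hx)) ∘ₗ
            LinearMap.adjoint
              (d₂.restrict (p := Submodule.comap d₂ K₁) (q := K₁) (fun _ hx => hx)) +
           LinearMap.adjoint (d₁.restrict hK) ∘ₗ d₁.restrict hK)) =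
      Module.finrank ℝ (LinearMap.ker (d₁.restrict hK)) -
        Module.finrank ℝ (LinearMap.range d₂ ⊓ K₁ : Submodule ℝ C₁) := by
  set A := d₂.restrict (p := Submodule.comap d₂ K₁) (q := K₁) (fun _ hx => hx) with hA
  set B := d₁.restrict hK with hB
  -- range A ≤ ker B
  have hrk : LinearMap.range A ≤ LinearMap.ker B := by
    rintro y ⟨x, rfl⟩
    have : (B (A x) : C₀) = 0 := by
      have := congrFun (congrArg DFunLike.coe hcomp) (x : C₂)
      simpa [hA, hB, LinearMap.restrict_apply] using this
    exact Subtype.ext this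
  -- kernel of the Laplacian
  have hker : LinearMap.ker (A ∘ₗ LinearMap.adjoint A + LinearMap.adjoint B ∘ₗ B)
      = (LinearMap.range A)ᗮ ⊓ LinearMap.ker B := by
    ext x
    simp only [LinearMap.mem_ker, Submodule.mem_inf, LinearMap.add_apply,
      LinearMap.comp_apply]
    constructor
    · intro h
      have h0 : (0 : ℝ) = (inner ℝ x (A (LinearMap.adjoint A x) + LinearMap.adjoint B (B x)) : ℝ) := by
        rw [h]; simp
      rw [inner_add_right, ← LinearMap.adjoint_inner_left A,
        LinearMap.adjoint_inner_right B] at h0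
      have hAx : LinearMap.adjoint A x = 0 := by
        have := real_inner_self_nonneg (x := LinearMap.adjoint A x)
        have := real_inner_self_nonneg (x := B x)
        have h1 : (inner ℝ (LinearMap.adjoint A x) (LinearMap.adjoint A x) : ℝ) = 0 := by linarith
        exact inner_self_eq_zero.mp h1
      have hBx : B x = 0 := by
        have := real_inner_self_nonneg (x := LinearMap.adjoint A x)
        have := real_inner_self_nonneg (x := B x)
        have h1 : (inner ℝ (B x) (B x) : ℝ) = 0 := by linarith
        exact inner_self_eq_zero.mp h1
      refine ⟨?_, hBx⟩
      intro u hu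
      obtain ⟨y, rfl⟩ := hu
      rw [real_inner_comm, ← LinearMap.adjoint_inner_left A, hAx, inner_zero_left]
    · rintro ⟨ho, hkB⟩
      have hAx : LinearMap.adjoint A x = 0 := by
        rw [← inner_self_eq_zero (𝕜 := ℝ)]
        rw [LinearMap.adjoint_inner_left]
        rw [real_inner_comm]
        exact ho _ ⟨_, rfl⟩
      rw [hAx, hkB, map_zero, map_zero, add_zero]
  rw [hker]
  -- dimension count
  have hdim := Submodule.finrank_add_inf_finrank_orthogonal hrk
  -- finrank of range A equals finrank of range d₂ ⊓ K₁
  have hmap : (LinearMap.range A).map K₁.subtype = LinearMap.range d₂ ⊓ K₁ := by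
    apply le_antisymm
    · rintro y ⟨z, ⟨x, rfl⟩, rfl⟩
      exact ⟨⟨x, rfl⟩, (A x).2⟩
    · rintro y ⟨⟨x, rfl⟩, hy⟩
      exact ⟨A ⟨x, hy⟩, ⟨⟨x, hy⟩, rfl⟩, rfl⟩
  have hrA : finrank ℝ (LinearMap.range A) =
      finrank ℝ (LinearMap.range d₂ ⊓ K₁ : Submodule ℝ C₁) := by
    rw [← hmap, Submodule.finrank_map_subtype_eq]
  omega
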